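/- Let m ≥ 1 and for each i ∈ Fin m let A_i ⊆ B_i be finite sets of blocks, where each block has a global timestamp (v, i) ∈ ℕ × Fin m, timestamps are pairwise distinct, every block in A_i has v < s1, and every block in (B_i \ A_i) has v ≥ s1. Let L1 be the elements of ⋃ A_i sorted by lexicographic timestamp, and L2 the elements of ⋃ B_i sorted the same way. Then L1 is a prefix of L2. -/

import Mathlib

/-!
Sorting commutes with appending once every new element lies above every old one: the sorted
list of the old timestamps followed by the sorted list of the new ones is sorted and has the
right elements, so it is the sorted list of all timestamps. Every old block has clock `< s1` and
every new one clock `≥ s1`, so the lexicographic order puts all new timestamps after the old ones.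
-/

namespace Finset

variable {α : Type*} [DecidableEq α] (r : α → α → Prop) [DecidableRel r] [IsTrans α r]
  [Std.Antisymm r] [Std.Total r]

theorem sort_eq_sort_append_sort_sdiff {s t : Finset α} (hst : s ⊆ t)
    (h : ∀ a ∈ s, ∀ b ∈ t \ s, r a b) :
    t.sort r = s.sort r ++ (t \ s).sort r := by
  have hnodup : (s.sort r ++ (t \ s).sort r).Nodup := by
    refine List.nodup_append.2 ⟨sort_nodup s r, sort_nodup _ r, ?_⟩
    rintro a ha b hb rfl
    exact (mem_sdiff.1 ((mem_sort r).1 hb)).2 ((mem_sort r).1 ha)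
  have hsorted : (s.sort r ++ (t \ s).sort r).Pairwise r :=
    List.pairwise_append.2 ⟨pairwise_sort s r, pairwise_sort _ r,
      fun a ha b hb => h a ((mem_sort r).1 ha) b ((mem_sort r).1 hb)⟩
  have hfinset : (s.sort r ++ (t \ s).sort r).toFinset = t := by
    rw [List.toFinset_append, sort_toFinset, sort_toFinset, union_sdiff_of_subset hst]
  rw [← (List.toFinset_sort r hnodup).2 hsorted, hfinset]

theorem sort_prefix_sort {s t : Finset α} (hst : s ⊆ t) (h : ∀ a ∈ s, ∀ b ∈ t \ s, r a b) :
    s.sort r <+: t.sort r := by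
  rw [sort_eq_sort_append_sort_sdiff r hst h]
  exact List.prefix_append _ _

end Finset

theorem global_sequence_prefix_general {Block : Type*} [DecidableEq Block]
    (m : ℕ) (v : Block → ℕ) (chain : Block → Fin m)
    (ts : Block → ℕ ×ₗ Fin m) (hts : ts = fun b => toLex (v b, chain b))
    (A B : Fin m → Finset Block) (hAB : ∀ i, A i ⊆ B i)
    (s1 : ℕ)
    (hA : ∀ i, ∀ b ∈ A i, v b < s1)
    (hBA : ∀ i, ∀ b ∈ B i \ A i, s1 ≤ v b) :
    (((Finset.univ.biUnion A).image ts).sort (· ≤ ·)) <+: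
      (((Finset.univ.biUnion B).image ts).sort (· ≤ ·)) := by
  subst hts
  refine Finset.sort_prefix_sort _
    (Finset.image_subset_image (Finset.biUnion_mono fun i _ => hAB i)) ?_
  simp only [Finset.mem_sdiff, Finset.mem_image, Finset.mem_biUnion, Finset.mem_univ, true_and]
  rintro _ ⟨x, ⟨i, hx⟩, rfl⟩ _ ⟨⟨y, ⟨j, hy⟩, rfl⟩, hnew⟩
  have hy_new : y ∉ A j := fun hyA => hnew ⟨y, ⟨j, hyA⟩, rfl⟩
  have hclock : v x < v y := (hA i x hx).trans_le (hBA j y (Finset.mem_sdiff.2 ⟨hy, hy_new⟩))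
  exact (Prod.Lex.toLex_lt_toLex.2 (Or.inl hclock)).le

/-- Merging the per-chain confirmed prefixes by sorting on the lexicographic timestamp
`(clock, chain index)` yields globally confirmed sequences, and the earlier view's
sequence `L1` is a prefix of the later one's `L2`: with `A i ⊆ B i` finite sets of
blocks, injective timestamps, all blocks of the `A i` having clock `< s1` and all blocks
of `B i \ A i` having clock `≥ s1`. -/
theorem global_sequence_prefix {Block : Type*} [DecidableEq Block]
    (m : ℕ) (hm : 1 ≤ m) (v : Block → ℕ) (chain : Block → Fin m)
    (ts : Block → ℕ ×ₗ Fin m) (hts : ts = fun b => toLex (v b, chain b))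
    (hinj : Function.Injective ts)
    (A B : Fin m → Finset Block) (hAB : ∀ i, A i ⊆ B i)
    (s1 : ℕ)
    (hA : ∀ i, ∀ b ∈ A i, v b < s1)
    (hBA : ∀ i, ∀ b ∈ B i \ A i, s1 ≤ v b) :
    (((Finset.univ.biUnion A).image ts).sort (· ≤ ·)) <+:
      (((Finset.univ.biUnion B).image ts).sort (· ≤ ·)) :=
  global_sequence_prefix_general m v chain ts hts A B hAB s1 hA hBA
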